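/- arXiv:2204.02021 — 4 statements merged into one kernel-verified Lean document; each statement's English description precedes it below -/
import Mathlib

section
/- Let d ≥ 1 and let m be a positive integer. If x and y are two distinct vertices of Z^d with ‖x‖₁ = ‖y‖₁ = m, then there exist two paths π_x and π_y in Z^d, from x to 0 and from y to 0 respectively, each of length exactly m, such that the only vertex common to π_x and π_y is 0, and such that x is the only vertex of π_x with ℓ¹-norm ≥ m, and y is the only vertex of π_y with ℓ¹-norm ≥ m. -/
/-!
Empty the coordinates of `x` one at a time, starting with a coordinate `k` at which `y k` lies
outside the segment between `0` and `x k`, and empty those of `y` leaving `k` for last. Both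
paths lose one unit of norm per step, so a common vertex is visited by both at the same time `i`.
At a time `i < m` the `k`-th coordinate on the path of `y` is `y k` truncated to modulus `m - i`,
hence nonzero with the sign of `y k`, while on the path of `x` it lies between `0` and `x k` with
modulus at most `|x k| - i`; as `y k` lies outside that segment, the two cannot agree.
-/

open Finset

lemma exists_notMem_uIcc_of_sum_abs_eq {ι : Type*} [Fintype ι] {x y : ι → ℤ} (hxy : x ≠ y)
    (h : ∑ j, |x j| = ∑ j, |y j|) : ∃ k, y k ∉ Set.uIcc 0 (x k) := by
  by_contra! hmem
  have hle : ∀ j ∈ univ, |y j| ≤ |x j| := fun j _ => by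
    have := Set.mem_uIcc.1 (hmem j)
    simp only [abs_eq_max_neg]
    omega
  have habs := (sum_eq_sum_iff_of_le hle).1 h.symm
  refine hxy (funext fun j => ?_)
  have := Set.mem_uIcc.1 (hmem j)
  have := habs j (mem_univ j)
  simp only [abs_eq_max_neg] at this
  omega

lemma exists_injective_nat_forall_ne_lt {ι : Type*} [Countable ι] [DecidableEq ι] (k : ι) :
    ∃ q : ι → ℕ, Function.Injective q ∧ ∀ j ≠ k, q k < q j := by
  obtain ⟨e, he⟩ := Countable.exists_injective_nat ι
  refine ⟨fun j => if j = k then 0 else e j + 1, fun i j hij => ?_, fun j hj => by simp [hj]⟩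
  by_cases hi : i = k <;> by_cases hj : j = k <;> simp only [hi, hj, if_true, if_false] at hij
  · exact hi.trans hj.symm
  · omega
  · omega
  · exact he (by omega)

section
variable {ι α β : Type*} [LinearOrder α] [LinearOrder β]

lemma sum_min_max_sub_sum_filter_lt {w : ι → ℤ} (hw : ∀ j, 0 ≤ w j) {q : ι → α}
    (hq : Function.Injective q) (s : Finset ι) (t : ℤ) :
    ∑ j ∈ s, min (w j) (max 0 (t - ∑ i ∈ s with q j < q i, w i)) =
      min (∑ j ∈ s, w j) (max 0 t) := by
  classical
  induction s using Finset.induction_on_min_value q with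
  | empty => simp
  | insert a s ha hmin ih =>
    have hlt : ∀ j ∈ s, q a < q j := fun j hj =>
      (hmin j hj).lt_of_ne (hq.ne (ne_of_mem_of_not_mem hj ha).symm)
    have hfilter_a : {i ∈ insert a s | q a < q i} = s := by
      rw [filter_insert, if_neg (lt_irrefl _), filter_true_of_mem hlt]
    have hfilter : ∀ j ∈ s, {i ∈ insert a s | q j < q i} = {i ∈ s | q j < q i} := fun j hj => by
      rw [filter_insert, if_neg (hlt j hj).not_gt]
    have hrest : ∑ j ∈ s, min (w j) (max 0 (t - ∑ i ∈ insert a s with q j < q i, w i)) =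
        ∑ j ∈ s, min (w j) (max 0 (t - ∑ i ∈ s with q j < q i, w i)) :=
      sum_congr rfl fun j hj => by rw [hfilter j hj]
    rw [sum_insert ha, sum_insert ha, hfilter_a, hrest, ih]
    have := hw a
    have : 0 ≤ ∑ j ∈ s, w j := sum_nonneg fun j _ => hw j
    omega

variable [Fintype ι]

def shrinkBudget (v : ι → ℤ) (q : ι → α) (t : ℤ) (j : ι) : ℤ :=
  max 0 (t - ∑ i with q j < q i, |v i|)

/-- Coordinates are emptied in increasing order of the priority `q`: coordinate `j` keeps at
most what remains of the norm `t` once all coordinates of higher priority are kept in full. -/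
def shrinkToNorm (v : ι → ℤ) (q : ι → α) (t : ℤ) (j : ι) : ℤ :=
  max (-shrinkBudget v q t j) (min (v j) (shrinkBudget v q t j))

variable (v : ι → ℤ) (q : ι → α)

lemma shrinkBudget_nonneg (t : ℤ) (j : ι) : 0 ≤ shrinkBudget v q t j := le_max_left _ _

lemma shrinkBudget_mono {t t' : ℤ} (h : t ≤ t') (j : ι) :
    shrinkBudget v q t j ≤ shrinkBudget v q t' j :=
  max_le_max le_rfl (sub_le_sub_right h _)

lemma abs_shrinkToNorm (t : ℤ) (j : ι) :
    |shrinkToNorm v q t j| = min |v j| (shrinkBudget v q t j) := by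
  have := shrinkBudget_nonneg v q t j
  simp only [shrinkToNorm, abs_eq_max_neg]
  omega

lemma sum_abs_shrinkToNorm (hq : Function.Injective q) (t : ℤ) :
    ∑ j, |shrinkToNorm v q t j| = min (∑ j, |v j|) (max 0 t) := by
  simp only [abs_shrinkToNorm, shrinkBudget]
  exact sum_min_max_sub_sum_filter_lt (fun j => abs_nonneg _) hq univ t

lemma shrinkToNorm_of_sum_abs_le {t : ℤ} (h : ∑ j, |v j| ≤ t) : shrinkToNorm v q t = v := by
  funext j
  have hsplit : ∑ i with q j < q i, |v i| + |v j| ≤ ∑ i, |v i| := by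
    rw [← sum_filter_add_sum_filter_not univ (fun i => q j < q i)]
    have hj : j ∈ univ.filter (¬q j < q ·) := by simp
    exact add_le_add_right (single_le_sum (fun i _ => abs_nonneg (v i)) hj) _
  have : |v j| ≤ shrinkBudget v q t j := le_max_of_le_right (by linarith)
  rw [abs_le] at this
  rw [shrinkToNorm]
  omega

lemma shrinkToNorm_of_nonpos {t : ℤ} (h : t ≤ 0) : shrinkToNorm v q t = 0 := by
  funext j
  have : shrinkBudget v q t j = 0 :=
    max_eq_left <| by
      linarith [sum_nonneg fun i (_ : i ∈ univ.filter (q j < q ·)) => abs_nonneg (v i)]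
  simp [shrinkToNorm, this]

lemma sum_abs_shrinkToNorm_sub (hq : Function.Injective q) {t t' : ℤ} (h : t ≤ t') :
    ∑ j, |shrinkToNorm v q t j - shrinkToNorm v q t' j| =
      min (∑ j, |v j|) (max 0 t') - min (∑ j, |v j|) (max 0 t) := by
  rw [← sum_abs_shrinkToNorm v q hq, ← sum_abs_shrinkToNorm v q hq, ← sum_sub_distrib]
  refine sum_congr rfl fun j _ => ?_
  have := shrinkBudget_mono v q h j
  have := shrinkBudget_nonneg v q t j
  simp only [shrinkToNorm, abs_eq_max_neg]
  omega

lemma shrinkBudget_of_forall_lt {k : ι} (hk : ∀ j ≠ k, q k < q j) (t : ℤ) :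
    shrinkBudget v q t k = max 0 (t - (∑ j, |v j| - |v k|)) := by
  classical
  have : univ.filter (q k < q ·) = univ.erase k := by
    ext i
    simp only [mem_filter, mem_univ, true_and, mem_erase, and_true]
    exact ⟨fun h hik => (hik ▸ h).false, hk i⟩
  rw [shrinkBudget, this, sum_erase_eq_sub (mem_univ k)]

lemma shrinkBudget_of_forall_gt {k : ι} (hk : ∀ j ≠ k, q j < q k) (t : ℤ) :
    shrinkBudget v q t k = max 0 t := by
  have : univ.filter (q k < q ·) = ∅ :=
    filter_false_of_mem fun i _ h => by
      rcases eq_or_ne i k with rfl | hik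
      · exact h.false
      · exact (hk i hik).not_gt h
  rw [shrinkBudget, this, sum_empty, sub_zero]

lemma shrinkToNorm_apply_ne {x y : ι → ℤ} (hxy : ∑ j, |x j| = ∑ j, |y j|) {k : ι}
    (hk : y k ∉ Set.uIcc 0 (x k)) {qx : ι → α} {qy : ι → β} (hqx : ∀ j ≠ k, qx k < qx j)
    (hqy : ∀ j ≠ k, qy j < qy k) {t : ℤ} (ht : 0 < t) :
    shrinkToNorm x qx t k ≠ shrinkToNorm y qy t k := by
  have hyk : |y k| ≤ ∑ j, |y j| := single_le_sum (fun j _ => abs_nonneg (y j)) (mem_univ k)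
  rw [Set.mem_uIcc] at hk
  rw [shrinkToNorm, shrinkToNorm, shrinkBudget_of_forall_lt x qx hqx,
    shrinkBudget_of_forall_gt y qy hqy, hxy]
  generalize ∑ j, |y j| = n at hyk ⊢
  simp only [abs_eq_max_neg] at hyk ⊢
  omega

def descentPath (v : ι → ℤ) (q : ι → α) (n i : ℕ) : ι → ℤ := shrinkToNorm v q (n - i)

variable {v q} {n : ℕ}

lemma descentPath_zero (hv : ∑ j, |v j| = n) : descentPath v q n 0 = v :=
  shrinkToNorm_of_sum_abs_le v q (by simp [hv])

lemma descentPath_self : descentPath v q n n = 0 :=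
  shrinkToNorm_of_nonpos v q (sub_self _).le

lemma sum_abs_descentPath (hq : Function.Injective q) (hv : ∑ j, |v j| = n) {i : ℕ}
    (hi : i ≤ n) : ∑ j, |descentPath v q n i j| = n - i := by
  rw [descentPath, sum_abs_shrinkToNorm v q hq, hv]
  omega

lemma sum_abs_descentPath_succ_sub (hq : Function.Injective q) (hv : ∑ j, |v j| = n) {i : ℕ}
    (hi : i < n) : ∑ j, |descentPath v q n (i + 1) j - descentPath v q n i j| = 1 := by
  rw [descentPath, descentPath, sum_abs_shrinkToNorm_sub v q hq (by omega), hv]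
  omega

lemma descentPath_eq_of_le_sum_abs (hq : Function.Injective q) (hv : ∑ j, |v j| = n) {i : ℕ}
    (hi : i ≤ n) (h : n ≤ ∑ j, |descentPath v q n i j|) : descentPath v q n i = v := by
  rw [sum_abs_descentPath hq hv hi] at h
  obtain rfl : i = 0 := by omega
  exact descentPath_zero hv

lemma descentPath_eq_zero_of_eq {x y : ι → ℤ} {qx : ι → α} {qy : ι → β}
    (hqx : Function.Injective qx) (hqy : Function.Injective qy) (hx : ∑ j, |x j| = n)
    (hy : ∑ j, |y j| = n) {k : ι}
    (hk : y k ∉ Set.uIcc 0 (x k)) (hqxk : ∀ j ≠ k, qx k < qx j) (hqyk : ∀ j ≠ k, qy j < qy k)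
    {i i' : ℕ} (hi : i ≤ n) (hi' : i' ≤ n) (h : descentPath x qx n i = descentPath y qy n i') :
    descentPath x qx n i = 0 := by
  have hnorm := sum_abs_descentPath hqx hx hi
  rw [h, sum_abs_descentPath hqy hy hi'] at hnorm
  obtain rfl : i' = i := by omega
  rcases hi.eq_or_lt with rfl | hlt
  · exact descentPath_self
  · exact absurd (congrFun h k) (shrinkToNorm_apply_ne (hx.trans hy.symm) hk hqxk hqyk (by omega))

end

theorem stmt0_general (d m : ℕ)
    (x y : Fin d → ℤ) (hxy : x ≠ y)
    (hx : ∑ i, |x i| = (m : ℤ)) (hy : ∑ i, |y i| = (m : ℤ)) :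
    ∃ πx πy : ℕ → (Fin d → ℤ),
      πx 0 = x ∧ πx m = 0 ∧ πy 0 = y ∧ πy m = 0 ∧
      (∀ i < m, ∑ j, |πx (i + 1) j - πx i j| = 1) ∧
      (∀ i < m, ∑ j, |πy (i + 1) j - πy i j| = 1) ∧
      (∀ i ≤ m, ∀ j ≤ m, πx i = πy j → πx i = 0) ∧
      (∀ i ≤ m, (m : ℤ) ≤ ∑ j, |πx i j| → πx i = x) ∧
      (∀ i ≤ m, (m : ℤ) ≤ ∑ j, |πy i j| → πy i = y) := by
  obtain ⟨k, hk⟩ := exists_notMem_uIcc_of_sum_abs_eq hxy (hx.trans hy.symm)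
  obtain ⟨q, hq, hqk⟩ := exists_injective_nat_forall_ne_lt k
  obtain ⟨q', hq', hq'k⟩ : ∃ q' : Fin d → ℕᵒᵈ, Function.Injective q' ∧ ∀ j ≠ k, q' j < q' k :=
    ⟨OrderDual.toDual ∘ q, OrderDual.toDual.injective.comp hq, hqk⟩
  exact ⟨descentPath x q m, descentPath y q' m,
    descentPath_zero hx, descentPath_self, descentPath_zero hy, descentPath_self,
    fun i => sum_abs_descentPath_succ_sub hq hx, fun i => sum_abs_descentPath_succ_sub hq' hy,
    fun i hi j hj => descentPath_eq_zero_of_eq hq hq' hx hy hk hqk hq'k hi hj,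
    fun i => descentPath_eq_of_le_sum_abs hq hx, fun i => descentPath_eq_of_le_sum_abs hq' hy⟩

/-- existence of two paths from `x` and `y` to `0`, each of length `m`,
meeting only at `0`, with `x` (resp. `y`) the only vertex of ℓ¹-norm ≥ m. -/
theorem stmt0 (d m : ℕ) (hd : 1 ≤ d) (hm : 0 < m)
    (x y : Fin d → ℤ) (hxy : x ≠ y)
    (hx : ∑ i, |x i| = (m : ℤ)) (hy : ∑ i, |y i| = (m : ℤ)) :
    ∃ πx πy : ℕ → (Fin d → ℤ),
      πx 0 = x ∧ πx m = 0 ∧ πy 0 = y ∧ πy m = 0 ∧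
      (∀ i < m, ∑ j, |πx (i + 1) j - πx i j| = 1) ∧
      (∀ i < m, ∑ j, |πy (i + 1) j - πy i j| = 1) ∧
      (∀ i ≤ m, ∀ j ≤ m, πx i = πy j → πx i = 0) ∧
      (∀ i ≤ m, (m : ℤ) ≤ ∑ j, |πx i j| → πx i = x) ∧
      (∀ i ≤ m, (m : ℤ) ≤ ∑ j, |πy i j| → πy i = y) :=
  stmt0_general d m x y hxy hx hy
end

section
/- Let γ = (v_0, …, v_m) be a path in Z^d and let N ≥ 1. For v ∈ Z^d let s(v) denote the unique s ∈ Z^d with v ∈ B^∞_{s,N}, where B^∞_{s,N} = {w ∈ Z^d : (s−1/2)N ≤ w_i < (s+1/2)N for all i}. Let A(γ) be the set of distinct values s(v_i) for 0 ≤ i ≤ m, and let |A(γ)| be its cardinality. Then the number of edges of γ satisfies m ≥ N(|A(γ)|/3^d − 1). -/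
/-!
Cut the path into the blocks `γ (N q), …, γ (N q + N - 1)` of `N` consecutive vertices. Inside a
block every coordinate moves by less than `N`, so the meta-cube index moves by at most one in every
coordinate: the meta-cubes met by a block lie among the `3^d` neighbours of the one met by its first
vertex. There are `⌊m / N⌋ + 1 ≤ m / N + 1` blocks, hence `|A(γ)| ≤ (m / N + 1) 3^d`.
-/

open Finset

theorem abs_sub_le_of_abs_succ_sub_le_one {f : ℕ → ℤ} {m : ℕ}
    (hf : ∀ k < m, |f (k + 1) - f k| ≤ 1) (i : ℕ) {n : ℕ} (hn : i + n ≤ m) :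
    |f (i + n) - f i| ≤ n := by
  induction n with
  | zero => simp
  | succ n ih =>
    calc |f (i + (n + 1)) - f i| ≤ |f (i + n + 1) - f (i + n)| + |f (i + n) - f i| :=
          abs_sub_le _ _ _
      _ ≤ 1 + n := add_le_add (hf (i + n) (by omega)) (ih (by omega))
      _ = (n + 1 : ℕ) := by push_cast; ring

/-- The one-dimensional meta-cube `[(s - 1/2) N, (s + 1/2) N)`, scaled by `2` to stay in `ℤ`. -/
def metaInterval (N s : ℤ) : Set ℤ := {v | (2 * s - 1) * N ≤ 2 * v ∧ 2 * v < (2 * s + 1) * N}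

theorem abs_sub_le_one_of_mem_metaInterval {N s t v w : ℤ} (hv : v ∈ metaInterval N s)
    (hw : w ∈ metaInterval N t) (hvw : |v - w| < N) : |s - t| ≤ 1 := by
  have hN : 0 < N := (abs_nonneg _).trans_lt hvw
  obtain ⟨hv₁, hv₂⟩ := hv
  obtain ⟨hw₁, hw₂⟩ := hw
  rw [abs_lt] at hvw
  rw [abs_le]
  constructor <;> by_contra! h <;> nlinarith

theorem card_Icc_sub_one_add_one {ι : Type*} [Fintype ι] [DecidableEq ι] (c : ι → ℤ) :
    #(Icc (c - 1) (c + 1)) = 3 ^ Fintype.card ι := by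
  simp only [Pi.card_Icc, Pi.sub_apply, Pi.add_apply, Pi.one_apply, Int.card_Icc]
  simp [show ∀ x : ℤ, x + 1 + 1 - (x - 1) = 3 by intro; ring]

theorem card_image_range_le_of_abs_sub_blockStart_le_one {ι : Type*} [Fintype ι] [DecidableEq ι]
    (σ : ℕ → ι → ℤ) (m N : ℕ) (hσ : ∀ i ≤ m, ∀ j, |σ i j - σ (N * (i / N)) j| ≤ 1) :
    #((range (m + 1)).image σ) ≤ (m / N + 1) * 3 ^ Fintype.card ι := by
  have hsub : (range (m + 1)).image σ ⊆
      (range (m / N + 1)).biUnion fun q => Icc (σ (N * q) - 1) (σ (N * q) + 1) := by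
    simp only [subset_iff, mem_image, mem_range, mem_biUnion, mem_Icc, forall_exists_index,
      and_imp, forall_apply_eq_imp_iff₂]
    intro i hi
    have hnear j := abs_le.mp (hσ i (by omega) j)
    refine ⟨i / N, Nat.lt_succ_of_le (Nat.div_le_div_right (by omega)), fun j => ?_, fun j => ?_⟩
      <;> simp only [Pi.sub_apply, Pi.add_apply, Pi.one_apply] <;> linarith [hnear j]
  calc #((range (m + 1)).image σ) ≤ _ := card_le_card hsub
    _ ≤ #(range (m / N + 1)) * 3 ^ Fintype.card ι :=
      card_biUnion_le_card_mul _ _ _ fun q _ => (card_Icc_sub_one_add_one _).le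
    _ = (m / N + 1) * 3 ^ Fintype.card ι := by rw [card_range]

/-- lattice-animal bound `m ≥ N(|A(γ)|/3^d − 1)` for the set of
meta-cubes visited by a path `γ` with `m` edges. -/
theorem stmt3 (d m N : ℕ) (hN : 1 ≤ N)
    (γ : ℕ → (Fin d → ℤ))
    (hpath : ∀ i < m, ∑ j, |γ (i + 1) j - γ i j| = 1)
    (sfun : (Fin d → ℤ) → (Fin d → ℤ))
    (hs : ∀ v : Fin d → ℤ, ∀ i : Fin d,
      (2 * sfun v i - 1) * (N : ℤ) ≤ 2 * v i ∧ 2 * v i < (2 * sfun v i + 1) * (N : ℤ)) :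
    (N : ℝ) * (((Finset.image (fun i => sfun (γ i)) (Finset.range (m + 1))).card : ℝ) / 3 ^ d - 1)
      ≤ (m : ℝ) := by
  have hstep : ∀ j, ∀ k < m, |γ (k + 1) j - γ k j| ≤ 1 := fun j k hk =>
    (hpath k hk).symm ▸ single_le_sum (fun j' _ => abs_nonneg (γ (k + 1) j' - γ k j')) (mem_univ j)
  have hblock : ∀ i ≤ m, ∀ j, |sfun (γ i) j - sfun (γ (N * (i / N))) j| ≤ 1 := by
    intro i hi j
    have hdiv := Nat.div_add_mod i N
    have hmove := abs_sub_le_of_abs_succ_sub_le_one (f := fun k => γ k j) (hstep j) (N * (i / N))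
      (n := i % N) (by omega)
    rw [hdiv] at hmove
    refine abs_sub_le_one_of_mem_metaInterval (hs _ j) (hs _ j) (hmove.trans_lt ?_)
    exact_mod_cast Nat.mod_lt i (by omega)
  have hcard := card_image_range_le_of_abs_sub_blockStart_le_one _ m N hblock
  rw [Fintype.card_fin] at hcard
  have hnat : N * #((range (m + 1)).image fun i => sfun (γ i)) ≤ (m + N) * 3 ^ d :=
    calc _ ≤ N * ((m / N + 1) * 3 ^ d) := Nat.mul_le_mul_left _ hcard
      _ = (N * (m / N) + N) * 3 ^ d := by ring
      _ ≤ (m + N) * 3 ^ d := Nat.mul_le_mul_right _ (by have := Nat.mul_div_le m N; omega)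
  have hreal : (N : ℝ) * #((range (m + 1)).image fun i => sfun (γ i)) ≤ (m + N) * 3 ^ d := by
    exact_mod_cast hnat
  rw [mul_sub, mul_div_assoc', div_sub' (by positivity), div_le_iff₀ (by positivity)]
  linarith
end

section
/- Let X and X' be paths in a weighted graph from 0 to x with edge weights T and T* respectively, where T*(e) ≤ T(e) for all e, T*(e) < T(e) exactly for e in a finite set E, with all edges of E lying on a path γ that is a geodesic for T. If γ* is a geodesic from 0 to x for T* and if there is an edge of E not on γ*, then a contradiction arises; consequently every geodesic from 0 to x for T* contains all edges of E. Formally: suppose γ is a T-geodesic from 0 to x, E ⊆ edges(γ), T*(e) < T(e) for all e ∈ E, T* = T off E, and γ* is a T*-geodesic from 0 to x. Then E ⊆ edges(γ*). -/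
/-- Vertices of the hypercubic lattice. -/
abbrev Vtx (d : ℕ) := Fin d → ℤ

/-- ℓ¹-distance between two vertices. -/
def dist1 {d : ℕ} (a b : Vtx d) : ℤ := ∑ i, |a i - b i|

/-- A (nearest-neighbour) path from `a` to `b`, given as its list of vertices. -/
def IsLatPath {d : ℕ} (π : List (Vtx d)) (a b : Vtx d) : Prop :=
  π ≠ [] ∧ π.head? = some a ∧ π.getLast? = some b ∧
    List.Chain' (fun u v => dist1 u v = 1) π

/-- The (unordered) edges of a path. -/
def pathEdges {d : ℕ} (π : List (Vtx d)) : List (Sym2 (Vtx d)) :=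
  List.zipWith (fun a b => s(a, b)) π π.tail

/-- Total weight of a path for edge weights `T`. -/
def pathWeight {d : ℕ} (T : Sym2 (Vtx d) → ℝ) (π : List (Vtx d)) : ℝ :=
  ((pathEdges π).map T).sum

/-- A geodesic from `a` to `b` for the weights `T`. -/
def IsGeodesic {d : ℕ} (T : Sym2 (Vtx d) → ℝ) (a b : Vtx d) (π : List (Vtx d)) : Prop :=
  IsLatPath π a b ∧ ∀ π', IsLatPath π' a b → pathWeight T π ≤ pathWeight T π'
/-! Write `Δ = T - T* ≥ 0`; it vanishes off `E`. Minimality of the two geodesics gives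
`Δ(γ) = T(γ) - T*(γ) ≤ T(γ*) - T*(γ*) = Δ(γ*)`. Since `γ` traverses every edge of `E`,
`Δ(γ) ≥ ∑_E Δ`, while a vertex-simple `γ*` traverses each edge at most once, so missing
`e ∈ E` would give `Δ(γ*) ≤ ∑_E Δ - Δ(e) < ∑_E Δ`. Vertex-simplicity is no loss: a repeated
vertex of a geodesic closes a loop of nonnegative weight (traversing it twice is not shorter),
and erasing the loop leaves a geodesic whose edges are among the original ones. -/

theorem List.exists_eq_append_cons_append_cons_of_not_nodup {α : Type*} {l : List α}
    (h : ¬ l.Nodup) : ∃ (A : List α) (z : α) (B C : List α), l = A ++ z :: (B ++ z :: C) := by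
  induction l with
  | nil => exact absurd List.nodup_nil h
  | cons a t ih =>
    by_cases hat : a ∈ t
    · obtain ⟨B, C, rfl⟩ := List.append_of_mem hat
      exact ⟨[], a, B, C, rfl⟩
    · obtain ⟨A, z, B, C, rfl⟩ := ih fun ht => h (List.nodup_cons.2 ⟨hat, ht⟩)
      exact ⟨a :: A, z, B, C, rfl⟩

variable {d : ℕ}

theorem pathEdges_cons_cons (a b : Vtx d) (l : List (Vtx d)) :
    pathEdges (a :: b :: l) = s(a, b) :: pathEdges (b :: l) := rfl

theorem pathEdges_append_cons (l₁ : List (Vtx d)) (z : Vtx d) (l₂ : List (Vtx d)) :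
    pathEdges (l₁ ++ z :: l₂) = pathEdges (l₁ ++ [z]) ++ pathEdges (z :: l₂) := by
  induction l₁ using List.twoStepInduction with
  | nil | singleton => rfl
  | cons_cons a b t _ ih => simpa [pathEdges_cons_cons] using ih b

theorem mem_of_mem_pathEdges {l : List (Vtx d)} {e : Sym2 (Vtx d)} (he : e ∈ pathEdges l)
    {v : Vtx d} (hv : v ∈ e) : v ∈ l := by
  induction l using List.twoStepInduction with
  | nil | singleton => simp [pathEdges] at he
  | cons_cons a b t _ ih =>
    rw [pathEdges_cons_cons, List.mem_cons] at he
    rcases he with rfl | he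
    · rcases Sym2.mem_iff.1 hv with rfl | rfl <;> simp
    · exact List.mem_cons_of_mem _ (ih b he)

theorem nodup_pathEdges {l : List (Vtx d)} (h : l.Nodup) : (pathEdges l).Nodup := by
  induction l using List.twoStepInduction with
  | nil | singleton => simp [pathEdges]
  | cons_cons a b t _ ih =>
    rw [pathEdges_cons_cons]
    obtain ⟨ha, ht⟩ := List.nodup_cons.1 h
    exact List.nodup_cons.2
      ⟨fun hab => ha (mem_of_mem_pathEdges hab (Sym2.mem_mk_left a b)), ih b ht⟩

theorem pathEdges_append_cons_subset (A B C : List (Vtx d)) (z : Vtx d) :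
    pathEdges (A ++ z :: C) ⊆ pathEdges (A ++ z :: (B ++ z :: C)) := by
  rw [pathEdges_append_cons A z C, pathEdges_append_cons A z (B ++ z :: C), ← List.cons_append,
    pathEdges_append_cons (z :: B) z C]
  intro e he
  simp only [List.mem_append] at he ⊢
  tauto

theorem pathWeight_append_cons (T : Sym2 (Vtx d) → ℝ) (l₁ : List (Vtx d)) (z : Vtx d)
    (l₂ : List (Vtx d)) :
    pathWeight T (l₁ ++ z :: l₂) = pathWeight T (l₁ ++ [z]) + pathWeight T (z :: l₂) := by
  rw [pathWeight, pathEdges_append_cons, List.map_append, List.sum_append]; rfl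

theorem pathWeight_sub (T T' : Sym2 (Vtx d) → ℝ) (π : List (Vtx d)) :
    pathWeight (T - T') π = pathWeight T π - pathWeight T' π := by
  rw [eq_sub_iff_add_eq, pathWeight, pathWeight, pathWeight, ← List.sum_map_add]
  simp

theorem isLatPath_append_cons_iff {l₁ l₂ : List (Vtx d)} {a b z : Vtx d} :
    IsLatPath (l₁ ++ z :: l₂) a b ↔ IsLatPath (l₁ ++ [z]) a z ∧ IsLatPath (z :: l₂) z b := by
  have hhead : (l₁ ++ z :: l₂).head? = (l₁ ++ [z]).head? := by cases l₁ <;> rfl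
  have hlast : (l₁ ++ z :: l₂).getLast? = (z :: l₂).getLast? := by
    rw [List.getLast?_append_cons]
  simp only [IsLatPath, List.Chain']
  rw [List.isChain_split, hhead, hlast]
  simp
  tauto

theorem IsGeodesic.eraseLoop {T : Sym2 (Vtx d) → ℝ} {a b z : Vtx d} {A B C : List (Vtx d)}
    (hg : IsGeodesic T a b (A ++ z :: (B ++ z :: C))) : IsGeodesic T a b (A ++ z :: C) := by
  obtain ⟨hpath, hmin⟩ := hg
  rw [isLatPath_append_cons_iff, ← List.cons_append, isLatPath_append_cons_iff (l₁ := z :: B)]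
    at hpath
  obtain ⟨hA, hloop, hC⟩ := hpath
  have hweight (L : List (Vtx d)) : pathWeight T (A ++ z :: (B ++ z :: L)) =
      pathWeight T (A ++ [z]) + pathWeight T (z :: B ++ [z]) + pathWeight T (z :: L) := by
    rw [pathWeight_append_cons, ← List.cons_append, pathWeight_append_cons T (z :: B) z L,
      add_assoc]
  have hshort : IsLatPath (A ++ z :: C) a b := isLatPath_append_cons_iff.2 ⟨hA, hC⟩
  have hdouble : IsLatPath (A ++ z :: (B ++ z :: (B ++ z :: C))) a b := by
    rw [isLatPath_append_cons_iff, ← List.cons_append, isLatPath_append_cons_iff (l₁ := z :: B)]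
    exact ⟨hA, hloop, isLatPath_append_cons_iff.2 ⟨hloop, hC⟩⟩
  have hloop_nonneg : 0 ≤ pathWeight T (z :: B ++ [z]) := by
    have := hmin _ hdouble
    rw [hweight, hweight, ← List.cons_append, pathWeight_append_cons T (z :: B) z C] at this
    linarith
  refine ⟨hshort, fun π' hπ' => le_trans ?_ (hmin π' hπ')⟩
  rw [hweight, pathWeight_append_cons]
  linarith

theorem IsGeodesic.exists_nodup_pathEdges_subset {T : Sym2 (Vtx d) → ℝ} {a b : Vtx d}
    {π : List (Vtx d)} (hg : IsGeodesic T a b π) :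
    ∃ π₀, IsGeodesic T a b π₀ ∧ π₀.Nodup ∧ pathEdges π₀ ⊆ pathEdges π := by
  induction h : π.length using Nat.strong_induction_on generalizing π with
  | _ n ih =>
    by_cases hnd : π.Nodup
    · exact ⟨π, hg, hnd, List.Subset.refl _⟩
    obtain ⟨A, z, B, C, rfl⟩ := List.exists_eq_append_cons_append_cons_of_not_nodup hnd
    obtain ⟨π₀, hg₀, hnd₀, hsub₀⟩ := ih _ (by simp at h ⊢; omega) hg.eraseLoop rfl
    exact ⟨π₀, hg₀, hnd₀, List.Subset.trans hsub₀ (pathEdges_append_cons_subset A B C z)⟩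

theorem List.sum_toFinset_le_sum_map {ι M : Type*} [DecidableEq ι] [AddCommMonoid M]
    [PartialOrder M] [IsOrderedAddMonoid M] {f : ι → M} (l : List ι) (hf : ∀ i ∈ l, 0 ≤ f i) :
    ∑ i ∈ l.toFinset, f i ≤ (l.map f).sum := by
  rw [Finset.sum_list_map_count]
  refine Finset.sum_le_sum fun i hi => ?_
  rw [List.mem_toFinset] at hi
  exact le_smul_of_one_le_left (hf i hi) (List.count_pos_iff.2 hi)

theorem sum_le_pathWeight {Δ : Sym2 (Vtx d) → ℝ} (hΔ : ∀ e, 0 ≤ Δ e)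
    {E : Finset (Sym2 (Vtx d))} {π : List (Vtx d)} (hE : ∀ e ∈ E, e ∈ pathEdges π) :
    ∑ e ∈ E, Δ e ≤ pathWeight Δ π := by
  calc ∑ e ∈ E, Δ e ≤ ∑ e ∈ (pathEdges π).toFinset, Δ e :=
        Finset.sum_le_sum_of_subset_of_nonneg (fun e he => List.mem_toFinset.2 (hE e he))
          fun e _ _ => hΔ e
    _ ≤ pathWeight Δ π := List.sum_toFinset_le_sum_map _ fun e _ => hΔ e

theorem pathWeight_add_le_sum_of_notMem {Δ : Sym2 (Vtx d) → ℝ} {E : Finset (Sym2 (Vtx d))}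
    (hΔ : ∀ e, 0 ≤ Δ e) (hΔE : ∀ e ∉ E, Δ e = 0) {π : List (Vtx d)} (hπ : π.Nodup)
    {e₀ : Sym2 (Vtx d)} (he₀E : e₀ ∈ E) (he₀π : e₀ ∉ pathEdges π) :
    pathWeight Δ π + Δ e₀ ≤ ∑ e ∈ E, Δ e := by
  set S := (pathEdges π).toFinset.filter (· ∈ E)
  have hS : pathWeight Δ π = ∑ e ∈ S, Δ e := by
    rw [Finset.sum_filter_of_ne fun e _ he => not_imp_comm.1 (hΔE e) he, pathWeight,
      List.sum_toFinset _ (nodup_pathEdges hπ)]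
  have he₀S : e₀ ∉ S := fun h => he₀π (List.mem_toFinset.1 (Finset.mem_filter.1 h).1)
  calc pathWeight Δ π + Δ e₀ = ∑ e ∈ insert e₀ S, Δ e := by
        rw [Finset.sum_insert he₀S, hS, add_comm]
    _ ≤ ∑ e ∈ E, Δ e := by
        refine Finset.sum_le_sum_of_subset_of_nonneg ?_ fun e _ _ => hΔ e
        exact Finset.insert_subset he₀E fun e he => (Finset.mem_filter.1 he).2

/-- if the weights are lowered exactly on a finite set `E` of edges of a
`T`-geodesic `γ`, then every `T*`-geodesic from `0` to `x` contains all edges of `E`. -/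
theorem stmt6 {d : ℕ} (T Tstar : Sym2 (Vtx d) → ℝ)
    (x : Vtx d) (γ γstar : List (Vtx d)) (E : Finset (Sym2 (Vtx d)))
    (hgeo : IsGeodesic T 0 x γ)
    (hE : ∀ e ∈ E, e ∈ pathEdges γ)
    (hlt : ∀ e ∈ E, Tstar e < T e)
    (heq : ∀ e ∉ E, Tstar e = T e)
    (hgeostar : IsGeodesic Tstar 0 x γstar) :
    ∀ e ∈ E, e ∈ pathEdges γstar := by
  intro e₀ he₀
  by_contra hmiss
  have hΔ : ∀ e, 0 ≤ (T - Tstar) e := fun e => by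
    by_cases he : e ∈ E
    · exact sub_nonneg.2 (hlt e he).le
    · simp [heq e he]
  have hΔE : ∀ e ∉ E, (T - Tstar) e = 0 := fun e he => by simp [heq e he]
  obtain ⟨π₀, hgeo₀, hnd₀, hsub₀⟩ := hgeostar.exists_nodup_pathEdges_subset
  have hγ := sum_le_pathWeight hΔ hE
  have hπ₀ := pathWeight_add_le_sum_of_notMem hΔ hΔE hnd₀ he₀ fun h => hmiss (hsub₀ h)
  rw [pathWeight_sub] at hγ hπ₀
  have hTγ := hgeo.2 π₀ hgeo₀.1
  have hTstarπ₀ := hgeo₀.2 γ hgeo.1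
  have hgap : 0 < (T - Tstar) e₀ := sub_pos.2 (hlt e₀ he₀)
  linarith
end

section
/- Let t_max > 0, r, δ > 0, and let r₃ < r₄ be positive integers with r₄ > r₃(r+δ+t_max)/(r+δ). Suppose in a weighted graph that: (a) t(u₀, v₀) ≤ 2 r₃ N t_max for vertices u₀, v₀ in an inner ball B₃ of ℓ¹-radius r₃N around c; (b) every path contained in the outer ball B₄ of ℓ¹-radius r₄N around c between endpoints at ℓ¹-distance ≥ N has weight at least (r+δ) times that distance. Then every geodesic between u₀ and v₀ is entirely contained in B₄. (Key inequality: 2(r₄−r₃)N(r+δ) > 2 r₃ N t_max.) -/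
/-!
Follow a geodesic `π` from `u₀` to `v₀` and suppose it leaves `B₄`. The ℓ¹-distance to `c`
changes by at most one per step, so before its first exit `π` runs inside `B₄` from level
`≤ r₃N` to level `r₄N`, and likewise after its last re-entry. These two disjoint pieces have
endpoints at distance `≥ (r₄ - r₃)N ≥ N`, so by (b) each weighs at least `(r + δ)(r₄ - r₃)N`.
The choice of `r₄` makes `2(r + δ)(r₄ - r₃)N > 2r₃N·t_max`, contradicting minimality against
the path provided by (a).
-/

lemma dist1_comm {d : ℕ} (a b : Vtx d) : dist1 a b = dist1 b a :=
  Finset.sum_congr rfl fun _ _ => abs_sub_comm _ _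

lemma dist1_triangle {d : ℕ} (a b c : Vtx d) : dist1 a c ≤ dist1 a b + dist1 b c := by
  rw [dist1, dist1, dist1, ← Finset.sum_add_distrib]
  exact Finset.sum_le_sum fun _ _ => abs_sub_le _ _ _

lemma abs_dist1_sub_dist1_le {d : ℕ} (a b c : Vtx d) :
    |dist1 a c - dist1 b c| ≤ dist1 a b := by
  have := dist1_triangle a b c
  have := dist1_triangle b a c
  rw [dist1_comm b a] at this
  exact abs_sub_le_iff.2 ⟨by linarith, by linarith⟩

section Weight

variable {d : ℕ} (T : Sym2 (Vtx d) → ℝ)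

lemma pathWeight_cons_cons (x y : Vtx d) (t : List (Vtx d)) :
    pathWeight T (x :: y :: t) = T s(x, y) + pathWeight T (y :: t) := by
  simp [pathWeight, pathEdges]

lemma pathWeight_add_le_append (hT : ∀ e, 0 ≤ T e) :
    ∀ l₁ l₂ : List (Vtx d), pathWeight T l₁ + pathWeight T l₂ ≤ pathWeight T (l₁ ++ l₂)
  | [], l₂ => by simp [pathWeight, pathEdges]
  | [x], [] => by simp [pathWeight, pathEdges]
  | [x], y :: t => by
    rw [List.singleton_append, pathWeight_cons_cons]
    simpa [pathWeight, pathEdges] using hT s(x, y)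
  | x :: y :: t, l₂ => by
    rw [List.cons_append, List.cons_append, pathWeight_cons_cons, pathWeight_cons_cons,
      ← List.cons_append]
    linarith [pathWeight_add_le_append hT (y :: t) l₂]

lemma pathWeight_nonneg (hT : ∀ e, 0 ≤ T e) (l : List (Vtx d)) : 0 ≤ pathWeight T l :=
  List.sum_nonneg fun _ he => by
    obtain ⟨e, -, rfl⟩ := List.mem_map.1 he
    exact hT e

lemma pathWeight_add_le_append_append (hT : ∀ e, 0 ≤ T e) (l₁ l₂ l₃ : List (Vtx d)) :
    pathWeight T l₁ + pathWeight T l₃ ≤ pathWeight T (l₁ ++ l₂ ++ l₃) := by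
  linarith [pathWeight_add_le_append T hT l₁ l₂, pathWeight_add_le_append T hT (l₁ ++ l₂) l₃,
    pathWeight_nonneg T hT l₂]

end Weight

lemma IsLatPath.left_of_append {d : ℕ} {l₁ l₂ : List (Vtx d)} {a b b' : Vtx d}
    (h : IsLatPath (l₁ ++ l₂) a b) (hb' : l₁.getLast? = some b') : IsLatPath l₁ a b' := by
  obtain ⟨-, ha, -, hc⟩ := h
  have hne : l₁ ≠ [] := by rintro rfl; simp at hb'
  exact ⟨hne, by rwa [List.head?_append_of_ne_nil _ hne] at ha, hb', hc.left_of_append⟩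

lemma IsLatPath.right_of_append {d : ℕ} {l₁ l₂ : List (Vtx d)} {a b a' : Vtx d}
    (h : IsLatPath (l₁ ++ l₂) a b) (ha' : l₂.head? = some a') : IsLatPath l₂ a' b := by
  obtain ⟨-, -, hb, hc⟩ := h
  have hne : l₂ ≠ [] := by rintro rfl; simp at ha'
  exact ⟨hne, ha', by rwa [List.getLast?_append_of_ne_nil _ hne] at hb, hc.right_of_append⟩

section Exit

variable {α : Type*} {R : α → α → Prop} (f : α → ℤ) (B : ℤ)

lemma exists_append_of_exists_lt (hR : ∀ u v, R u v → f v ≤ f u + 1) :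
    ∀ {l : List α}, l.IsChain R → (∀ x ∈ l.head?, f x ≤ B) → (∃ z ∈ l, B < f z) →
      ∃ p q, l = p ++ q ∧ (∀ x ∈ p, f x ≤ B) ∧ (∃ b ∈ p.getLast?, B ≤ f b) ∧
        ∃ y ∈ q, B < f y
  | [], _, _, ⟨_, hz, _⟩ => absurd hz List.not_mem_nil
  | [x], _, hx, ⟨z, hz, hBz⟩ => by
    obtain rfl := List.mem_singleton.1 hz
    exact absurd (hx z rfl) (not_le.2 hBz)
  | x :: y :: t, hc, hx, ⟨z, hz, hBz⟩ => by
    rw [List.isChain_cons_cons] at hc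
    have hfx : f x ≤ B := hx x rfl
    by_cases hy : B < f y
    · exact ⟨[x], y :: t, rfl, by simpa using hfx, ⟨x, rfl, by linarith [hR x y hc.1]⟩,
        y, List.mem_cons_self, hy⟩
    have hz' : z ∈ y :: t := (List.mem_cons.1 hz).resolve_left (by rintro rfl; omega)
    obtain ⟨p, q, hpq, hp, ⟨b, hb, hBb⟩, hq⟩ :=
      exists_append_of_exists_lt hR hc.2 (by simpa using not_lt.1 hy) ⟨z, hz', hBz⟩
    have hne : p ≠ [] := by rintro rfl; simp at hb
    refine ⟨x :: p, q, by rw [hpq, List.cons_append], ?_, ⟨b, ?_, hBb⟩, hq⟩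
    · simpa [hfx] using hp
    · rwa [List.getLast?_cons_of_ne_nil hne]

lemma exists_append_append_of_exists_lt
    (hR : ∀ u v, R u v → |f v - f u| ≤ 1) {l : List α} (hc : l.IsChain R)
    (hhead : ∀ x ∈ l.head?, f x ≤ B) (hlast : ∀ x ∈ l.getLast?, f x ≤ B)
    (hz : ∃ z ∈ l, B < f z) :
    ∃ p m s, l = p ++ m ++ s ∧ (∀ x ∈ p, f x ≤ B) ∧ (∀ x ∈ s, f x ≤ B) ∧
      (∃ b ∈ p.getLast?, B ≤ f b) ∧ ∃ a ∈ s.head?, B ≤ f a := by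
  obtain ⟨p, q, rfl, hp, hb, y, hy, hBy⟩ :=
    exists_append_of_exists_lt f B (fun u v h => by linarith [(abs_le.1 (hR u v h)).2])
      hc hhead hz
  obtain ⟨s', m', hq, hs, ha, -⟩ :=
    exists_append_of_exists_lt (R := fun a b => R b a) f B
      (fun u v h => by linarith [(abs_le.1 (hR v u h)).1])
      (List.isChain_reverse.2 hc.right_of_append)
      (by rwa [List.head?_reverse, ← List.getLast?_append_of_ne_nil p (List.ne_nil_of_mem hy)])
      ⟨y, List.mem_reverse.2 hy, hBy⟩
  refine ⟨p, m'.reverse, s'.reverse, ?_, hp, by simpa using hs, hb,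
    by simpa [List.head?_reverse] using ha⟩
  rw [List.append_assoc, ← List.reverse_append, ← hq, List.reverse_reverse]

end Exit

lemma IsLatPath.exists_append_append_crossing {d : ℕ} {l : List (Vtx d)} {u v c : Vtx d}
    {A B : ℤ} (hl : IsLatPath l u v) (hu : dist1 u c ≤ A) (hv : dist1 v c ≤ A) (hAB : A ≤ B)
    (hz : ∃ z ∈ l, B < dist1 z c) :
    ∃ p m s b a, l = p ++ m ++ s ∧ IsLatPath p u b ∧ IsLatPath s a v ∧
      (∀ x ∈ p, dist1 x c ≤ B) ∧ (∀ x ∈ s, dist1 x c ≤ B) ∧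
      B - A ≤ dist1 u b ∧ B - A ≤ dist1 a v := by
  obtain ⟨hne, hhead, hlast, hc⟩ := hl
  obtain ⟨p, m, s, rfl, hp, hs, ⟨b, hb, hBb⟩, ⟨a, ha, hBa⟩⟩ :=
    exists_append_append_of_exists_lt (fun x => dist1 x c) B
      (fun x y hxy => (abs_dist1_sub_dist1_le y x c).trans_eq (by rw [dist1_comm, hxy]))
      hc (by simp [hhead]; omega) (by simp [hlast]; omega) hz
  have hl : IsLatPath (p ++ m ++ s) u v := ⟨hne, hhead, hlast, hc⟩
  refine ⟨p, m, s, b, a, rfl, (List.append_assoc p m s ▸ hl).left_of_append hb,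
    hl.right_of_append ha, hp, hs, ?_, ?_⟩
  · linarith [dist1_triangle b u c, dist1_comm b u]
  · linarith [dist1_triangle a v c]

theorem stmt14_general {d : ℕ} (T : Sym2 (Vtx d) → ℝ) (hT : ∀ e, 0 ≤ T e)
    (tmax r δ : ℝ) (hr : 0 < r) (hδ : 0 < δ)
    (r3 r4 N : ℕ) (h34 : r3 < r4) (hN : 0 < N)
    (hr4 : (r3 : ℝ) * (r + δ + tmax) / (r + δ) < (r4 : ℝ))
    (c u0 v0 : Vtx d)
    (hu0 : ((dist1 u0 c : ℤ) : ℝ) ≤ r3 * N) (hv0 : ((dist1 v0 c : ℤ) : ℝ) ≤ r3 * N)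
    (ha : ∃ π, IsLatPath π u0 v0 ∧ pathWeight T π ≤ 2 * r3 * N * tmax)
    (hb : ∀ (a b : Vtx d) (π : List (Vtx d)), IsLatPath π a b →
      (∀ z ∈ π, ((dist1 z c : ℤ) : ℝ) ≤ r4 * N) → (N : ℝ) ≤ ((dist1 a b : ℤ) : ℝ) →
      (r + δ) * ((dist1 a b : ℤ) : ℝ) ≤ pathWeight T π) :
    ∀ π, IsGeodesic T u0 v0 π → ∀ z ∈ π, ((dist1 z c : ℤ) : ℝ) ≤ r4 * N := by
  intro π hπ z hz
  by_contra hout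
  obtain ⟨p, m, s, b, a, rfl, hp, hs, hpB, hsB, hub, hav⟩ :=
    hπ.1.exists_append_append_crossing (A := r3 * N) (B := r4 * N) (by exact_mod_cast hu0)
      (by exact_mod_cast hv0) (by gcongr) ⟨z, hz, by exact_mod_cast not_le.1 hout⟩
  have hN' : (N : ℝ) ≤ r4 * N - r3 * N := by
    have : (r3 + 1 : ℝ) ≤ r4 := by exact_mod_cast h34
    nlinarith
  have cross : ∀ a b l, IsLatPath l a b → (∀ x ∈ l, dist1 x c ≤ r4 * N) →
      (r4 * N : ℤ) - r3 * N ≤ dist1 a b → (r + δ) * (r4 * N - r3 * N) ≤ pathWeight T l := by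
    intro a b l hl hin hab
    have hab' : (r4 * N : ℝ) - r3 * N ≤ dist1 a b := by exact_mod_cast hab
    calc (r + δ) * (r4 * N - r3 * N) ≤ (r + δ) * dist1 a b := by gcongr
      _ ≤ pathWeight T l := hb a b l hl (fun x hx => by exact_mod_cast hin x hx) (hN'.trans hab')
  have hkey : 2 * r3 * N * tmax < 2 * ((r + δ) * (r4 * N - r3 * N)) := by
    have := (div_lt_iff₀ (by linarith : (0 : ℝ) < r + δ)).1 hr4
    have hN0 : (0 : ℝ) < N := by exact_mod_cast hN
    nlinarith
  obtain ⟨π₀, hπ₀, hw₀⟩ := ha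
  linarith [hπ.2 π₀ hπ₀, pathWeight_add_le_append_append T hT p m s,
    cross u0 b p hp hpB hub, cross a v0 s hs hsB hav]

/-- under (a) a cheap connection inside `B₃` and (b) a linear lower
bound for paths inside `B₄`, every geodesic between `u₀, v₀ ∈ B₃` stays in `B₄`. -/
theorem stmt14 {d : ℕ} (T : Sym2 (Vtx d) → ℝ) (hT : ∀ e, 0 ≤ T e)
    (tmax r δ : ℝ) (htmax : 0 < tmax) (hr : 0 < r) (hδ : 0 < δ)
    (r3 r4 N : ℕ) (hr3 : 0 < r3) (h34 : r3 < r4) (hN : 0 < N)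
    (hr4 : (r3 : ℝ) * (r + δ + tmax) / (r + δ) < (r4 : ℝ))
    (c u0 v0 : Vtx d)
    (hu0 : ((dist1 u0 c : ℤ) : ℝ) ≤ r3 * N) (hv0 : ((dist1 v0 c : ℤ) : ℝ) ≤ r3 * N)
    (ha : ∃ π, IsLatPath π u0 v0 ∧ pathWeight T π ≤ 2 * r3 * N * tmax)
    (hb : ∀ (a b : Vtx d) (π : List (Vtx d)), IsLatPath π a b →
      (∀ z ∈ π, ((dist1 z c : ℤ) : ℝ) ≤ r4 * N) → (N : ℝ) ≤ ((dist1 a b : ℤ) : ℝ) →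
      (r + δ) * ((dist1 a b : ℤ) : ℝ) ≤ pathWeight T π) :
    ∀ π, IsGeodesic T u0 v0 π → ∀ z ∈ π, ((dist1 z c : ℤ) : ℝ) ≤ r4 * N :=
  stmt14_general T hT tmax r δ hr hδ r3 r4 N h34 hN hr4 c u0 v0 hu0 hv0 ha hb
end
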